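/- arXiv:2110.01504 — 2 statements merged into one kernel-verified Lean document; each statement's English description precedes it below -/
import Mathlib

section
/- Unique extension for the formal Poisson constraint: for every function ρ : I → ℝ and every function q : I₁ → ℝ, there exists a unique function p : I → ℝ such that p(i) = q(i) for all i ∈ I₁ and Σ_{μ∈M} p(i + 2e_μ) = ρ(i) for all i ∈ I. -/
/-!
Solved for `p (j + 2 e_k)`, the equation at `j` expresses that value through `ρ j` and the values
`p (j + 2 e_μ)`, `μ ≠ k`, whose `k`-th entry is only `j k`. Hence `p` is determined by its values on
`{i | i k ≤ 1}` through recursion on the `k`-th entry, and the function defined by this recursion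
satisfies every equation.
-/

abbrev MIdx (m : ℕ) := Fin m → ℕ

theorem Pi.single_le_iff {ι α : Type*} [DecidableEq ι] [AddMonoid α] [PartialOrder α]
    [CanonicallyOrderedAdd α] {k : ι} {a : α} {i : ι → α} : Pi.single k a ≤ i ↔ a ≤ i k := by
  refine ⟨fun h ↦ by simpa using h k, fun h ν ↦ ?_⟩
  rcases eq_or_ne ν k with rfl | hν
  · simpa using h
  · simp [Pi.single_eq_of_ne hν]

section

variable {ι G : Type*} [Fintype ι] [DecidableEq ι] [AddCommGroup G]
  (k : ι) (ρ : (ι → ℕ) → G) (q : {i : ι → ℕ // i k ≤ 1} → G)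

def poissonExtension (i : ι → ℕ) : G :=
  if h : i k ≤ 1 then q ⟨i, h⟩
  else ρ (i - Pi.single k 2) -
    ∑ μ : {μ // μ ≠ k}, poissonExtension (i - Pi.single k 2 + Pi.single (μ : ι) 2)
termination_by i k
decreasing_by simp [Pi.single_eq_of_ne' μ.2]; omega

lemma poissonExtension_of_le_one (i : ι → ℕ) (h : i k ≤ 1) :
    poissonExtension k ρ q i = q ⟨i, h⟩ := by
  rw [poissonExtension, dif_pos h]

lemma poissonExtension_add_single (j : ι → ℕ) :
    poissonExtension k ρ q (j + Pi.single k 2) =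
      ρ j - ∑ μ : {μ // μ ≠ k}, poissonExtension k ρ q (j + Pi.single (μ : ι) 2) := by
  rw [poissonExtension, dif_neg (by simp), add_tsub_cancel_right]

lemma sum_poissonExtension_add_single (j : ι → ℕ) :
    ∑ μ, poissonExtension k ρ q (j + Pi.single μ 2) = ρ j := by
  rw [Fintype.sum_eq_add_sum_subtype_ne _ k, poissonExtension_add_single, sub_add_cancel]

lemma eq_poissonExtension {p : (ι → ℕ) → G} (hq : ∀ i (h : i k ≤ 1), p i = q ⟨i, h⟩)
    (hρ : ∀ j, ∑ μ, p (j + Pi.single μ 2) = ρ j) : p = poissonExtension k ρ q := by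
  funext i
  induction hn : i k using Nat.strong_induction_on generalizing i with
  | _ n ih =>
  by_cases h : i k ≤ 1
  · rw [hq i h, poissonExtension_of_le_one k ρ q i h]
  obtain ⟨j, rfl⟩ : ∃ j, i = j + Pi.single k 2 :=
    ⟨i - Pi.single k 2, (tsub_add_cancel_of_le (Pi.single_le_iff.2 (by omega))).symm⟩
  have hj : j k + 2 = n := by simpa using hn
  rw [poissonExtension_add_single, ← hρ j, Fintype.sum_eq_add_sum_subtype_ne _ k,
    add_sub_assoc, left_eq_add, sub_eq_zero]
  refine Fintype.sum_congr _ _ fun μ ↦ ih _ ?_ _ rfl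
  simp [Pi.single_eq_of_ne' μ.2]
  omega

end

theorem statement10_general (m : ℕ) [NeZero m]
    (ρ : MIdx m → ℝ) (q : {i : MIdx m // i 0 ≤ 1} → ℝ) :
    ∃! p : MIdx m → ℝ,
      (∀ (i : MIdx m) (h : i 0 ≤ 1), p i = q ⟨i, h⟩) ∧
      (∀ i : MIdx m, ∑ μ : Fin m, p (i + Pi.single μ 2) = ρ i) :=
  ⟨poissonExtension 0 ρ q,
    ⟨poissonExtension_of_le_one 0 ρ q, sum_poissonExtension_add_single 0 ρ q⟩,
    fun _ ⟨hq, hρ⟩ ↦ eq_poissonExtension 0 ρ q hq hρ⟩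

/-- unique extension for the formal Poisson constraint: for every
`ρ : I → ℝ` and `q : I₁ → ℝ` (`I₁ = {i : i¹ ≤ 1}`) there is a unique `p : I → ℝ`
restricting to `q` on `I₁` and satisfying `Σ_{μ∈M} p(i + 2e_μ) = ρ(i)` for all
`i ∈ I`. -/
theorem statement10 (m : ℕ) [NeZero m] (hm : 2 ≤ m)
    (ρ : MIdx m → ℝ) (q : {i : MIdx m // i 0 ≤ 1} → ℝ) :
    ∃! p : MIdx m → ℝ,
      (∀ (i : MIdx m) (h : i 0 ≤ 1), p i = q ⟨i, h⟩) ∧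
      (∀ i : MIdx m, ∑ μ : Fin m, p (i + Pi.single μ 2) = ρ i) :=
  statement10_general m ρ q
end

section
/- Global coordinates on the solution manifold of the continuity and Poisson constraints: for multi-indices k ≤ i define C(i,k) = Π_{ν=1}^{m} binom(i_ν, k_ν). Then the restriction map (u, p) ↦ (u¹|_{I₀}, (u^α)_{α∈N}, p|_{I₁}) is a bijection from the set of pairs of families u = (u^μ)_{μ∈M}, u^μ : I → ℝ, and p : I → ℝ satisfying, for every i ∈ I, both Σ_{μ∈M} u^μ(i + e_μ) = 0 (the continuity constraints CE_i = 0) and Σ_{μ∈M} p(i + 2e_μ) + Σ_{k+l=i} C(i,k) Σ_{λ,μ∈M} u^λ(k + e_μ) u^μ(l + e_λ) = 0 (the Poisson constraints PE_i = 0), onto the product set ℝ^{I₀} × (ℝ^I)^N × ℝ^{I₁}. -/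
/-- The product of binomial coefficients `C(i,k) = Π_ν binom(i_ν, k_ν)`. -/
def multiChoose {m : ℕ} (i k : MIdx m) : ℕ := ∏ ν : Fin m, (i ν).choose (k ν)

open Finset

namespace MIdx

variable {m : ℕ}

lemma sub_single_add_single {ν : Fin m} {i : MIdx m} {a : ℕ} (h : a ≤ i ν) :
    i - Pi.single ν a + Pi.single ν a = i := by
  funext μ
  by_cases hμ : μ = ν
  · subst hμ; simp only [Pi.add_apply, Pi.sub_apply, Pi.single_eq_same]; omega
  · simp [Pi.single_eq_of_ne hμ]

lemma add_single_apply_of_ne {ν μ : Fin m} (hμ : μ ≠ ν) (i : MIdx m) (a : ℕ) :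
    (i + Pi.single μ a : MIdx m) ν = i ν := by
  simp [Pi.single_eq_of_ne hμ.symm]

end MIdx

section Constraints

variable {G : Type*} [AddCommGroup G] {m : ℕ} (ν : Fin m)

lemma apply_eq_of_sum_add_eq_zero {F : Fin m → G} {c : G} (h : ∑ μ, F μ + c = 0) :
    F ν = -(∑ α : {α // α ≠ ν}, F α) - c := by
  rw [Fintype.sum_eq_add_sum_subtype_ne F ν] at h
  rw [eq_sub_iff_add_eq, eq_neg_iff_add_eq_zero, ← h]
  abel

section Velocity

def velocityOfCoords (f : {i : MIdx m // i ν = 0} → G) (g : {α : Fin m // α ≠ ν} → MIdx m → G) :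
    Fin m → MIdx m → G := fun μ i =>
  if hμ : μ = ν then
    if hi : i ν = 0 then f ⟨i, hi⟩
    else -∑ α, g α (i - Pi.single ν 1 + Pi.single (α : Fin m) 1)
  else g ⟨μ, hμ⟩ i

variable (f : {i : MIdx m // i ν = 0} → G) (g : {α : Fin m // α ≠ ν} → MIdx m → G)

lemma velocityOfCoords_self_of_eq_zero (i : {i : MIdx m // i ν = 0}) :
    velocityOfCoords ν f g ν i = f i := by
  simp [velocityOfCoords, i.2]

lemma velocityOfCoords_of_ne (α : {α : Fin m // α ≠ ν}) :
    velocityOfCoords ν f g α = g α := by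
  funext i; simp [velocityOfCoords, α.2]

lemma velocityOfCoords_self_add_single (i : MIdx m) :
    velocityOfCoords ν f g ν (i + Pi.single ν 1) = -∑ α, g α (i + Pi.single (α : Fin m) 1) := by
  simp [velocityOfCoords, add_tsub_cancel_right]

lemma sum_velocityOfCoords_add_single (i : MIdx m) :
    ∑ μ, velocityOfCoords ν f g μ (i + Pi.single μ 1) = 0 := by
  simp only [Fintype.sum_eq_add_sum_subtype_ne _ ν, velocityOfCoords_self_add_single,
    velocityOfCoords_of_ne, neg_add_cancel]

variable {ν}

lemma velocity_ext {u v : Fin m → MIdx m → G}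
    (hu : ∀ i : MIdx m, ∑ μ, u μ (i + Pi.single μ 1) = 0)
    (hv : ∀ i : MIdx m, ∑ μ, v μ (i + Pi.single μ 1) = 0)
    (hself : ∀ i : MIdx m, i ν = 0 → u ν i = v ν i) (hne : ∀ α, α ≠ ν → u α = v α) : u = v := by
  funext μ i
  by_cases hμ : μ = ν
  · subst hμ
    by_cases hi : i μ = 0
    · exact hself i hi
    · rw [← MIdx.sub_single_add_single (ν := μ) (a := 1) (by omega : 1 ≤ i μ),
        apply_eq_of_sum_add_eq_zero μ ((add_zero _).trans (hu _)),
        apply_eq_of_sum_add_eq_zero μ ((add_zero _).trans (hv _))]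
      exact congrArg (fun s => -s - 0) (Fintype.sum_congr _ _ fun α => by rw [hne α α.2])
  · rw [hne μ hμ]

end Velocity

section Pressure

def pressureOfBoundary (q : MIdx m → G) (h : {i : MIdx m // i ν ≤ 1} → G) (i : MIdx m) : G :=
  if hi : i ν ≤ 1 then h ⟨i, hi⟩
  else
    -(∑ α : {α : Fin m // α ≠ ν},
        pressureOfBoundary q h (i - Pi.single ν 2 + Pi.single (α : Fin m) 2))
      - q (i - Pi.single ν 2)
termination_by i ν
decreasing_by
  simp only [Pi.add_apply, Pi.sub_apply, Pi.single_eq_same, Pi.single_eq_of_ne α.2.symm]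
  omega

variable (q : MIdx m → G) (h : {i : MIdx m // i ν ≤ 1} → G)

lemma pressureOfBoundary_of_le_one (i : {i : MIdx m // i ν ≤ 1}) :
    pressureOfBoundary ν q h i = h i := by
  rw [pressureOfBoundary, dif_pos i.2]

lemma pressureOfBoundary_add_single_self (i : MIdx m) :
    pressureOfBoundary ν q h (i + Pi.single ν 2) =
      -(∑ α : {α : Fin m // α ≠ ν}, pressureOfBoundary ν q h (i + Pi.single (α : Fin m) 2))
        - q i := by
  rw [pressureOfBoundary, dif_neg (by simp), add_tsub_cancel_right]

lemma sum_pressureOfBoundary_add_single (i : MIdx m) :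
    ∑ μ, pressureOfBoundary ν q h (i + Pi.single μ 2) + q i = 0 := by
  rw [Fintype.sum_eq_add_sum_subtype_ne _ ν, pressureOfBoundary_add_single_self]
  abel

variable {ν q}

lemma pressure_ext {p p' : MIdx m → G}
    (hp : ∀ i : MIdx m, ∑ μ, p (i + Pi.single μ 2) + q i = 0)
    (hp' : ∀ i : MIdx m, ∑ μ, p' (i + Pi.single μ 2) + q i = 0)
    (hboundary : ∀ i : MIdx m, i ν ≤ 1 → p i = p' i) : p = p' := by
  funext i
  induction hn : i ν using Nat.strong_induction_on generalizing i with
  | _ n ih =>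
    by_cases hi : i ν ≤ 1
    · exact hboundary i hi
    · obtain ⟨j, rfl⟩ : ∃ j : MIdx m, i = j + Pi.single ν 2 :=
        ⟨_, (MIdx.sub_single_add_single (by omega : 2 ≤ i ν)).symm⟩
      rw [apply_eq_of_sum_add_eq_zero ν (hp j), apply_eq_of_sum_add_eq_zero ν (hp' j)]
      refine congrArg (fun s => -s - q j) (Fintype.sum_congr _ _ fun α => ih _ ?_ _ rfl)
      simp only [Pi.add_apply, Pi.single_eq_same, MIdx.add_single_apply_of_ne α.2] at hn ⊢
      omega

end Pressure

end Constraints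

-- For `k ∈ Iic i`, the truncated difference `i - k` is the unique `l` with `k + l = i`.
def poissonSource {R : Type*} [CommRing R] {m : ℕ} (u : Fin m → MIdx m → R) (i : MIdx m) : R :=
  ∑ k ∈ Iic i, (multiChoose i k : R) *
    ∑ lam, ∑ μ, u lam (k + Pi.single μ 1) * u μ (i - k + Pi.single lam 1)

theorem statement11_general (m : ℕ) [NeZero m] :
    Function.Bijective
      (fun Up : {Up : (Fin m → MIdx m → ℝ) × (MIdx m → ℝ) //
          (∀ i : MIdx m, ∑ μ : Fin m, Up.1 μ (i + Pi.single μ 1) = 0) ∧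
          (∀ i : MIdx m,
            (∑ μ : Fin m, Up.2 (i + Pi.single μ 2))
              + ∑ k ∈ Finset.Iic i, (multiChoose i k : ℝ) *
                  ∑ lam : Fin m, ∑ μ : Fin m,
                    Up.1 lam (k + Pi.single μ 1) * Up.1 μ ((i - k) + Pi.single lam 1) = 0)} =>
        ((fun i : {i : MIdx m // i 0 = 0} => Up.1.1 0 i.1,
          fun α : {α : Fin m // α ≠ 0} => Up.1.1 (α : Fin m),
          fun i : {i : MIdx m // i 0 ≤ 1} => Up.1.2 i.1) :
          ({i : MIdx m // i 0 = 0} → ℝ) × ({α : Fin m // α ≠ 0} → MIdx m → ℝ) ×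
            ({i : MIdx m // i 0 ≤ 1} → ℝ))) := by
  constructor
  · rintro ⟨⟨u, p⟩, hu, hp⟩ ⟨⟨v, p'⟩, hv, hp'⟩ heq
    simp only [Prod.mk.injEq, funext_iff, Subtype.forall] at heq
    obtain ⟨hself, hne, hboundary⟩ := heq
    obtain rfl : u = v := velocity_ext hu hv hself fun α hα => funext (hne α hα)
    obtain rfl : p = p' := pressure_ext (q := poissonSource u) hp hp' hboundary
    rfl
  · rintro ⟨f, g, h⟩
    let u := velocityOfCoords 0 f g
    refine ⟨⟨⟨u, pressureOfBoundary 0 (poissonSource u) h⟩,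
      sum_velocityOfCoords_add_single 0 f g, sum_pressureOfBoundary_add_single 0 _ h⟩, ?_⟩
    ext1
    · funext i; exact velocityOfCoords_self_of_eq_zero 0 f g i
    ext1
    · funext α; exact velocityOfCoords_of_ne 0 f g α
    · funext i; exact pressureOfBoundary_of_le_one 0 _ h i

/-- global coordinates on the solution manifold of the continuity
and Poisson constraints: the restriction map
`(u, p) ↦ (u¹|_{I₀}, (u^α)_{α∈N}, p|_{I₁})` is a bijection from the set of pairs
satisfying all the constraints `CE_i = 0` and `PE_i = 0` onto
`ℝ^{I₀} × (ℝ^I)^N × ℝ^{I₁}`. -/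
theorem statement11 (m : ℕ) [NeZero m] (hm : 2 ≤ m) :
    Function.Bijective
      (fun Up : {Up : (Fin m → MIdx m → ℝ) × (MIdx m → ℝ) //
          (∀ i : MIdx m, ∑ μ : Fin m, Up.1 μ (i + Pi.single μ 1) = 0) ∧
          (∀ i : MIdx m,
            (∑ μ : Fin m, Up.2 (i + Pi.single μ 2))
              + ∑ k ∈ Finset.Iic i, (multiChoose i k : ℝ) *
                  ∑ lam : Fin m, ∑ μ : Fin m,
                    Up.1 lam (k + Pi.single μ 1) * Up.1 μ ((i - k) + Pi.single lam 1) = 0)} =>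
        ((fun i : {i : MIdx m // i 0 = 0} => Up.1.1 0 i.1,
          fun α : {α : Fin m // α ≠ 0} => Up.1.1 (α : Fin m),
          fun i : {i : MIdx m // i 0 ≤ 1} => Up.1.2 i.1) :
          ({i : MIdx m // i 0 = 0} → ℝ) × ({α : Fin m // α ≠ 0} → MIdx m → ℝ) ×
            ({i : MIdx m // i 0 ≤ 1} → ℝ))) :=
  statement11_general m
end
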